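/- arXiv:math/0410058 — 4 statements merged into one kernel-verified Lean document; each statement's English description precedes it below -/
import Mathlib

section
/- Let p = (v_1, ..., v_n) be a Euclidean polygon and suppose a first-order isometric deformation of p induces angle variations dα_1, ..., dα_n ∈ ℝ. Then Σ_{i=1}^n dα_i = 0 and Σ_{i=1}^n dα_i v_i = 0 (as a vector in ℝ²). -/
/-- For a Euclidean polygon `v` (in ℂ) undergoing a first-order isometric
deformation, with edge directions `θ` and turning angles varying by `dα i = dθ i - dθ (i-1)`,
one has `∑ dα i = 0` and `∑ dα i • v i = 0`. -/
theorem euclidean_polygon_angle_variation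
    (n : ℕ) [NeZero n] (hn : 3 ≤ n)
    (v : ℝ → ZMod n → ℂ) (l : ZMod n → ℝ) (θ : ℝ → ZMod n → ℝ)
    (hl : ∀ i, 0 < l i)
    (hne : ∀ i, v 0 i ≠ v 0 (i + 1))
    -- isometric deformation: the edge lengths `l i` do not depend on the parameter `t`
    (hedge : ∀ t i, v t (i + 1) - v t i = (l i : ℂ) * Complex.exp ((θ t i : ℂ) * Complex.I))
    (dθ : ZMod n → ℝ)
    (hθ : ∀ i, HasDerivAt (fun t => θ t i) (dθ i) 0)
    (dα : ZMod n → ℝ)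
    -- the variation of the interior (turning) angle at vertex `i`
    (hdα : ∀ i, dα i = dθ i - dθ (i - 1)) :
    (∑ i : ZMod n, dα i = 0) ∧ (∑ i : ZMod n, (dα i : ℂ) * v 0 i = 0) := by
  have hshift : ∑ i : ZMod n, dθ (i - 1) = ∑ i : ZMod n, dθ i :=
    Equiv.sum_comp (Equiv.subRight (1 : ZMod n)) dθ
  constructor
  · simp [hdα, Finset.sum_sub_distrib, hshift]
  · have hterm : ∀ i : ZMod n, HasDerivAt (fun t => (l i : ℂ) * Complex.exp ((θ t i : ℂ) * Complex.I))
        ((l i : ℂ) * (Complex.exp ((θ 0 i : ℂ) * Complex.I) * ((dθ i : ℂ) * Complex.I))) 0 := by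
      intro i
      exact (((hθ i).ofReal_comp.mul_const Complex.I).cexp).const_mul _
    have hsum := HasDerivAt.fun_sum (fun i (_ : i ∈ Finset.univ) => hterm i)
    have hconst : (fun t => ∑ i : ZMod n, (l i : ℂ) * Complex.exp ((θ t i : ℂ) * Complex.I))
        = fun _ => (0 : ℂ) := by
      funext t
      have h1 : ∑ i : ZMod n, (v t (i + 1) - v t i) = 0 := by
        rw [Finset.sum_sub_distrib]
        rw [show ∑ i : ZMod n, v t (i + 1)
            = ∑ i : ZMod n, v t i from Equiv.sum_comp (Equiv.addRight (1 : ZMod n)) (v t)]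
        ring
      rw [← Finset.sum_congr rfl fun i _ => (hedge t i)]
      exact h1
    rw [hconst] at hsum
    have hD : ∑ i : ZMod n, (l i : ℂ) * (Complex.exp ((θ 0 i : ℂ) * Complex.I) * ((dθ i : ℂ) * Complex.I)) = 0 :=
      hsum.unique (hasDerivAt_const 0 0)
    have hD' : ∑ i : ZMod n, (dθ i : ℂ) * ((l i : ℂ) * Complex.exp ((θ 0 i : ℂ) * Complex.I)) = 0 := by
      have h2 := congrArg (fun z => z * (-Complex.I)) hD
      simp only [Finset.sum_mul, zero_mul] at h2
      rw [← h2]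
      apply Finset.sum_congr rfl
      intro i _
      have h3 : Complex.I * -Complex.I = 1 := by
        rw [mul_neg, Complex.I_mul_I]; ring
      rw [show (l i : ℂ) * (Complex.exp ((θ 0 i : ℂ) * Complex.I) * ((dθ i : ℂ) * Complex.I)) * -Complex.I
          = (dθ i : ℂ) * ((l i : ℂ) * Complex.exp ((θ 0 i : ℂ) * Complex.I)) * (Complex.I * -Complex.I) from by ring,
        h3, mul_one]
    have hshift2 : ∑ i : ZMod n, (dθ (i - 1) : ℂ) * v 0 i
        = ∑ i : ZMod n, (dθ i : ℂ) * v 0 (i + 1) := by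
      have := Equiv.sum_comp (Equiv.subRight (1 : ZMod n))
        (fun i => (dθ i : ℂ) * v 0 (i + 1))
      simpa using this
    have key : ∑ i : ZMod n, (dα i : ℂ) * v 0 i
        = -∑ i : ZMod n, (dθ i : ℂ) * (v 0 (i + 1) - v 0 i) := by
      simp only [hdα, Complex.ofReal_sub, sub_mul, mul_sub, Finset.sum_sub_distrib, hshift2]
      ring
    rw [key]
    rw [Finset.sum_congr rfl fun i _ => by rw [hedge 0 i]]
    rw [neg_eq_zero]
    exact hD'
end

section
/- Fix real numbers S_2, ..., S_n ∈ (0,1]. Define F(s) = s · sin(Σ_{i=2}^n arcsin(S_i/s)) on the set of s ≥ max_i S_i for which Σ_{i=2}^n arcsin(S_i/s) ∈ (0, π). Then F is strictly increasing on this set; in particular for any S_1 > 0 there is at most one s with F(s) = S_1. -/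
open Real

/-- Two-term strict superadditivity of `tan` on `(0, π/2)`. -/
lemma tan_add_gt {a b : ℝ} (ha : 0 < a) (hb : 0 < b) (hab : a + b < π / 2) :
    Real.tan a + Real.tan b < Real.tan (a + b) := by
  have ha2 : a < π / 2 := lt_of_le_of_lt (le_add_of_nonneg_right hb.le) hab
  have hb2 : b < π / 2 := lt_of_le_of_lt (le_add_of_nonneg_left ha.le) hab
  have hca : 0 < Real.cos a := Real.cos_pos_of_mem_Ioo ⟨by linarith [Real.pi_pos], ha2⟩
  have hcb : 0 < Real.cos b := Real.cos_pos_of_mem_Ioo ⟨by linarith [Real.pi_pos], hb2⟩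
  have hcab : 0 < Real.cos (a + b) :=
    Real.cos_pos_of_mem_Ioo ⟨by linarith [Real.pi_pos], hab⟩
  have hsa : 0 < Real.sin a := Real.sin_pos_of_pos_of_lt_pi ha (by linarith [Real.pi_pos])
  have hsb : 0 < Real.sin b := Real.sin_pos_of_pos_of_lt_pi hb (by linarith [Real.pi_pos])
  have hN : 0 < Real.sin a * Real.cos b + Real.cos a * Real.sin b := by positivity
  have hlt : Real.cos (a + b) < Real.cos a * Real.cos b := by
    rw [Real.cos_add]; nlinarith
  have key : (Real.sin a * Real.cos b + Real.cos a * Real.sin b) / (Real.cos a * Real.cos b)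
      < (Real.sin a * Real.cos b + Real.cos a * Real.sin b) / Real.cos (a + b) :=
    div_lt_div_of_pos_left hN hcab hlt
  calc Real.tan a + Real.tan b
      = (Real.sin a * Real.cos b + Real.cos a * Real.sin b) / (Real.cos a * Real.cos b) := by
        rw [Real.tan_eq_sin_div_cos, Real.tan_eq_sin_div_cos]
        field_simp
    _ < (Real.sin a * Real.cos b + Real.cos a * Real.sin b) / Real.cos (a + b) := key
    _ = Real.tan (a + b) := by rw [Real.tan_eq_sin_div_cos, Real.sin_add]

/-- Superadditivity of `tan` over a finite sum of positive angles. -/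
lemma sum_tan_le {ι : Type*} (T : Finset ι) (θ : ι → ℝ) (hpos : ∀ i ∈ T, 0 < θ i)
    (hsum : ∑ i ∈ T, θ i < π / 2) :
    ∑ i ∈ T, Real.tan (θ i) ≤ Real.tan (∑ i ∈ T, θ i) := by
  induction T using Finset.cons_induction with
  | empty => simp
  | cons a T ha ih =>
    rw [Finset.sum_cons] at hsum ⊢
    rw [Finset.sum_cons]
    rcases T.eq_empty_or_nonempty with rfl | hT
    · simp
    · have hθa : 0 < θ a := hpos a (Finset.mem_cons_self a T)
      have hpos' : ∀ i ∈ T, 0 < θ i := fun i hi => hpos i (Finset.mem_cons_of_mem hi)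
      have hTpos : 0 < ∑ i ∈ T, θ i := Finset.sum_pos hpos' hT
      have h1 := ih hpos' (by linarith)
      have h2 := tan_add_gt hθa hTpos hsum
      linarith

/-- Strict superadditivity of `tan` over a finite sum with at least two positive angles. -/
lemma sum_tan_lt {ι : Type*} (T : Finset ι) (θ : ι → ℝ) (hpos : ∀ i ∈ T, 0 < θ i)
    (hsum : ∑ i ∈ T, θ i < π / 2) (hcard : 2 ≤ T.card) :
    ∑ i ∈ T, Real.tan (θ i) < Real.tan (∑ i ∈ T, θ i) := by
  classical
  obtain ⟨a, haT⟩ := Finset.card_pos.mp (lt_of_lt_of_le two_pos hcard)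
  have hT' : (T.erase a).Nonempty := by
    rw [← Finset.card_pos, Finset.card_erase_of_mem haT]; omega
  have hsplit : ∑ i ∈ T, θ i = θ a + ∑ i ∈ T.erase a, θ i :=
    (Finset.add_sum_erase T θ haT).symm
  have hsplit' : ∑ i ∈ T, Real.tan (θ i)
      = Real.tan (θ a) + ∑ i ∈ T.erase a, Real.tan (θ i) :=
    (Finset.add_sum_erase T (fun i => Real.tan (θ i)) haT).symm
  have hθa : 0 < θ a := hpos a haT
  have hpos' : ∀ i ∈ T.erase a, 0 < θ i := fun i hi => hpos i (Finset.mem_of_mem_erase hi)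
  have hEpos : 0 < ∑ i ∈ T.erase a, θ i := Finset.sum_pos hpos' hT'
  rw [hsplit] at hsum
  have h1 : ∑ i ∈ T.erase a, Real.tan (θ i) ≤ Real.tan (∑ i ∈ T.erase a, θ i) :=
    sum_tan_le _ _ hpos' (by linarith)
  have h2 := tan_add_gt hθa hEpos hsum
  rw [hsplit, hsplit']
  linarith

/-- for fixed `S i ∈ (0,1]` (at least two of them), the function
`F s = s * sin (∑ arcsin (S i / s))` is strictly increasing on the set of `s ≥ max S i`
where the sum of arcsines lies in `(0, π)`; in particular for any `S₁ > 0` there is at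
most one `s` in this set with `F s = S₁`. -/
theorem strictMono_inscribed_circle_function
    {ι : Type*} [Fintype ι] (h2 : 2 ≤ Fintype.card ι)
    (S : ι → ℝ) (hS : ∀ i, S i ∈ Set.Ioc (0 : ℝ) 1)
    (F : ℝ → ℝ) (hF : ∀ s, F s = s * Real.sin (∑ i, Real.arcsin (S i / s)))
    (D : Set ℝ)
    (hD : D = {s : ℝ | (∀ i, S i ≤ s) ∧
      (∑ i, Real.arcsin (S i / s)) ∈ Set.Ioo (0 : ℝ) Real.pi}) :
    StrictMonoOn F D ∧
      ∀ S₁ : ℝ, 0 < S₁ → ∀ s ∈ D, ∀ t ∈ D, F s = S₁ → F t = S₁ → s = t := by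
  have hι : Nonempty ι := Fintype.card_pos_iff.mp (by omega)
  have hFfun : F = fun s => s * Real.sin (∑ i, Real.arcsin (S i / s)) := funext hF
  -- positivity of elements of D
  have hDpos : ∀ s ∈ D, 0 < s := by
    intro s hs
    rw [hD] at hs
    exact lt_of_lt_of_le (hS (Classical.arbitrary ι)).1 (hs.1 _)
  -- D is convex
  have hconv : Convex ℝ D := by
    rw [convex_iff_ordConnected]
    constructor
    intro s hs t ht u hu
    rw [hD] at hs ht ⊢
    have hs0 : 0 < s := hDpos s (by rw [hD]; exact hs)
    have hu0 : 0 < u := lt_of_lt_of_le hs0 hu.1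
    refine ⟨fun i => le_trans (hs.1 i) hu.1, ?_, ?_⟩
    · apply Finset.sum_pos (fun i _ => Real.arcsin_pos.mpr (div_pos (hS i).1 hu0))
      exact Finset.univ_nonempty
    · refine lt_of_le_of_lt ?_ hs.2.2
      apply Finset.sum_le_sum
      intro i _
      exact Real.monotone_arcsin (div_le_div_of_nonneg_left (hS i).1.le hs0 hu.1)
  -- F is continuous on D
  have hcont : ContinuousOn F D := by
    rw [hFfun]
    intro s hs
    have hs0 : s ≠ 0 := (hDpos s hs).ne'
    apply ContinuousAt.continuousWithinAt
    have hsum : ContinuousAt (fun u => ∑ i, Real.arcsin (S i / u)) s :=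
      tendsto_finset_sum _ fun i _ =>
        Real.continuous_arcsin.continuousAt.comp
          (ContinuousAt.div continuousAt_const continuousAt_id hs0)
    exact continuousAt_id.mul (Real.continuous_sin.continuousAt.comp hsum)
  -- the derivative is positive on the interior of D
  have hderiv : ∀ x ∈ interior D, 0 < deriv F x := by
    intro x hx
    have hxD : x ∈ D := interior_subset hx
    have hx0 : 0 < x := hDpos x hxD
    have hxi : ∀ i, S i < x := by
      intro i
      have hsub : D ⊆ Set.Ici (S i) := by
        rw [hD]; intro s hs; exact hs.1 i
      have := interior_mono hsub hx
      rwa [interior_Ici] at this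
    -- basic facts about the quotients
    have hq0 : ∀ i, 0 < S i / x := fun i => div_pos (hS i).1 hx0
    have hq1 : ∀ i, S i / x < 1 := fun i => (div_lt_one hx0).mpr (hxi i)
    have hr : ∀ i, 0 < Real.sqrt (1 - (S i / x) ^ 2) := by
      intro i
      apply Real.sqrt_pos.mpr
      nlinarith [hq0 i, hq1 i]
    set g : ℝ := ∑ i, Real.arcsin (S i / x) with hg
    have hgmem : g ∈ Set.Ioo (0 : ℝ) π := by
      rw [hD] at hxD; exact hxD.2
    -- derivative of the sum of arcsines
    have hG : HasDerivAt (fun s => ∑ i, Real.arcsin (S i / s))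
        (∑ i, (1 / Real.sqrt (1 - (S i / x) ^ 2)) * (S i * -(x ^ 2)⁻¹)) x := by
      apply HasDerivAt.fun_sum
      intro i _
      have h1 : HasDerivAt (fun s : ℝ => S i / s) (S i * -(x ^ 2)⁻¹) x := by
        simpa [div_eq_mul_inv] using (hasDerivAt_inv hx0.ne').const_mul (S i)
      exact (Real.hasDerivAt_arcsin (by linarith [hq0 i]) (hq1 i).ne).comp x h1
    have hFd : HasDerivAt F
        (1 * Real.sin g + x * (Real.cos g *
          (∑ i, (1 / Real.sqrt (1 - (S i / x) ^ 2)) * (S i * -(x ^ 2)⁻¹)))) x := by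
      rw [hFfun]
      exact (hasDerivAt_id x).mul hG.sin
    rw [hFd.deriv]
    -- rewrite the sum using tangents
    have hxsum : x * (∑ i, (1 / Real.sqrt (1 - (S i / x) ^ 2)) * (S i * -(x ^ 2)⁻¹))
        = -∑ i, Real.tan (Real.arcsin (S i / x)) := by
      rw [Finset.mul_sum, ← Finset.sum_neg_distrib]
      apply Finset.sum_congr rfl
      intro i _
      rw [Real.tan_arcsin]
      have hrne := (hr i).ne'
      set r := Real.sqrt (1 - (S i / x) ^ 2) with hrdef
      field_simp [hrne, hx0.ne']
    have htan_nonneg : ∀ i, 0 ≤ Real.tan (Real.arcsin (S i / x)) := by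
      intro i
      rw [Real.tan_arcsin]
      exact div_nonneg (hq0 i).le (Real.sqrt_nonneg _)
    have hsin : 0 < Real.sin g := Real.sin_pos_of_pos_of_lt_pi hgmem.1 hgmem.2
    have key : 0 < Real.sin g - Real.cos g * ∑ i, Real.tan (Real.arcsin (S i / x)) := by
      rcases le_or_gt (Real.cos g) 0 with hcg | hcg
      · have : Real.cos g * ∑ i, Real.tan (Real.arcsin (S i / x)) ≤ 0 :=
          mul_nonpos_of_nonpos_of_nonneg hcg
            (Finset.sum_nonneg fun i _ => htan_nonneg i)
        linarith
      · have hg2 : g < π / 2 := by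
          by_contra h
          push_neg at h
          exact absurd (Real.cos_nonpos_of_pi_div_two_le_of_le h
            (by linarith [hgmem.2, Real.pi_pos])) (not_le.mpr hcg)
        have hstrict : ∑ i, Real.tan (Real.arcsin (S i / x)) < Real.tan g := by
          rw [hg]
          apply sum_tan_lt Finset.univ (fun i => Real.arcsin (S i / x))
            (fun i _ => Real.arcsin_pos.mpr (hq0 i)) (by rw [← hg]; exact hg2)
          simpa [Finset.card_univ] using h2
        have : Real.cos g * ∑ i, Real.tan (Real.arcsin (S i / x))
            < Real.cos g * Real.tan g := by
          exact mul_lt_mul_of_pos_left hstrict hcg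
        rw [Real.tan_eq_sin_div_cos, mul_div_cancel₀ _ hcg.ne'] at this
        linarith
    calc (0 : ℝ) < Real.sin g - Real.cos g * ∑ i, Real.tan (Real.arcsin (S i / x)) := key
      _ = 1 * Real.sin g + x * (Real.cos g *
          (∑ i, (1 / Real.sqrt (1 - (S i / x) ^ 2)) * (S i * -(x ^ 2)⁻¹))) := by
          rw [← mul_assoc, mul_comm x (Real.cos g), mul_assoc, hxsum]
          ring
  have hmono : StrictMonoOn F D := strictMonoOn_of_deriv_pos hconv hcont hderiv
  refine ⟨hmono, ?_⟩
  intro S₁ _ s hs t ht hFs hFt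
  exact hmono.injOn hs ht (hFs.trans hFt.symm)
end

section
/- Let n ≥ 3 and S_1, ..., S_n > 0, and suppose there exists S > max_i S_i such that either Σ_{i=1}^n arcsin(S_i/S) = π, or Σ_{i=2}^n arcsin(S_i/S) = arcsin(S_1/S) with S_1 the largest of the S_i. Then S_1 < Σ_{i=2}^n S_i. -/
/-!
Put `x i = arcsin (S i / R)`, so `sin (x i) = S i / R` with `x i ∈ (0, π/2)`. In either case the
angles `x i` with `i ≠ 0` add up to some `T ≤ π` with `sin T = S 0 / R` (in the first case
`T = π - x 0`). Since `sin (x + y) < sin x + sin y` for positive `x, y` with `x + y ≤ π`, the sine of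
a sum of at least two such angles is less than the sum of their sines, which gives
`S 0 / R < ∑_{i ≠ 0} S i / R`.
-/

open Real Finset

lemma abs_sin_sum_le {ι : Type*} (s : Finset ι) (x : ι → ℝ) :
    |sin (∑ i ∈ s, x i)| ≤ ∑ i ∈ s, |sin (x i)| := by
  induction s using Finset.cons_induction with
  | empty => simp
  | cons a s ha ih =>
    rw [sum_cons, sum_cons, sin_add]
    calc |sin (x a) * cos (∑ i ∈ s, x i) + cos (x a) * sin (∑ i ∈ s, x i)|
        ≤ |sin (x a)| * |cos (∑ i ∈ s, x i)| + |cos (x a)| * |sin (∑ i ∈ s, x i)| := by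
          rw [← abs_mul, ← abs_mul]; exact abs_add_le _ _
      _ ≤ |sin (x a)| * 1 + 1 * |sin (∑ i ∈ s, x i)| := by
          gcongr
          exacts [abs_cos_le_one _, abs_cos_le_one _]
      _ ≤ |sin (x a)| + ∑ i ∈ s, |sin (x i)| := by linarith

lemma sin_add_lt_sin_add_sin {x y : ℝ} (hx : 0 < x) (hy : 0 < y) (hxy : x + y ≤ π) :
    sin (x + y) < sin x + sin y := by
  have hsin_x : 0 < sin x := sin_pos_of_pos_of_lt_pi hx (by linarith)
  have hsin_y : 0 < sin y := sin_pos_of_pos_of_lt_pi hy (by linarith)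
  have hcos_y : cos y < 1 := by
    rw [← cos_zero]
    exact cos_lt_cos_of_nonneg_of_le_pi le_rfl (by linarith) hy
  rw [sin_add]
  nlinarith [cos_le_one x]

lemma sin_sum_lt_sum_sin {ι : Type*} {s : Finset ι} {x : ι → ℝ} (hs : 1 < #s)
    (hx : ∀ i ∈ s, 0 < x i) (hsum : ∑ i ∈ s, x i ≤ π) :
    sin (∑ i ∈ s, x i) < ∑ i ∈ s, sin (x i) := by
  classical
  obtain ⟨a, ha, b, hb, hab⟩ := one_lt_card.1 hs
  have hx_rest (i : ι) (hi : i ∈ s.erase a) : 0 < x i := hx i (mem_of_mem_erase hi)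
  have hrest : 0 < ∑ i ∈ s.erase a, x i := sum_pos hx_rest ⟨b, mem_erase.2 ⟨hab.symm, hb⟩⟩
  have hsin_rest (i : ι) (hi : i ∈ s.erase a) : 0 < sin (x i) :=
    sin_pos_of_pos_of_lt_pi (hx_rest i hi) <| by
      linarith [single_le_sum (fun j hj => (hx_rest j hj).le) hi, hx a ha,
        add_sum_erase s x ha]
  rw [← add_sum_erase s x ha] at hsum ⊢
  rw [← add_sum_erase s _ ha]
  calc sin (x a + ∑ i ∈ s.erase a, x i)
      < sin (x a) + sin (∑ i ∈ s.erase a, x i) := sin_add_lt_sin_add_sin (hx a ha) hrest hsum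
    _ ≤ sin (x a) + ∑ i ∈ s.erase a, |sin (x i)| := by
      gcongr
      exact (le_abs_self _).trans (abs_sin_sum_le _ _)
    _ = sin (x a) + ∑ i ∈ s.erase a, sin (x i) := by
      rw [sum_congr rfl fun i hi => abs_of_pos (hsin_rest i hi)]

/-- if `S i > 0` for `i : Fin n` (`n ≥ 3`) and there is `R` larger than every
`S i` such that either `∑ arcsin (S i / R) = π` (circumcenter inside) or
`∑_{i ≠ 0} arcsin (S i / R) = arcsin (S 0 / R)` with `S 0` the largest (circumcenter
outside), then `S 0 < ∑_{i ≠ 0} S i`. -/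
theorem inscribed_in_circle_inequality
    (n : ℕ) [NeZero n] (hn : 3 ≤ n)
    (S : Fin n → ℝ) (hS : ∀ i, 0 < S i)
    (R : ℝ) (hR : ∀ i, S i < R)
    (hcase :
      (∑ i, Real.arcsin (S i / R)) = Real.pi ∨
      ((∀ i, S i ≤ S 0) ∧
        (∑ i ∈ Finset.univ.erase 0, Real.arcsin (S i / R)) = Real.arcsin (S 0 / R))) :
    S 0 < ∑ i ∈ Finset.univ.erase 0, S i := by
  have hR0 : 0 < R := (hS 0).trans (hR 0)
  have hratio_pos (i : Fin n) : 0 < S i / R := div_pos (hS i) hR0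
  have hsin_arcsin (i : Fin n) : sin (arcsin (S i / R)) = S i / R :=
    sin_arcsin (by linarith [hratio_pos i]) ((div_lt_one hR0).2 (hR i)).le
  obtain ⟨hsin_sum, hsum_le⟩ :
      sin (∑ i ∈ univ.erase 0, arcsin (S i / R)) = S 0 / R ∧
        ∑ i ∈ univ.erase 0, arcsin (S i / R) ≤ π := by
    rcases hcase with h | ⟨-, h⟩
    · rw [← add_sum_erase _ _ (mem_univ 0)] at h
      rw [eq_sub_of_add_eq' h, sin_pi_sub, hsin_arcsin]
      exact ⟨rfl, by linarith [arcsin_pos.2 (hratio_pos 0)]⟩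
    · rw [h, hsin_arcsin]
      exact ⟨rfl, (arcsin_le_pi_div_two _).trans (by linarith [pi_pos])⟩
  have hcard : 1 < #(univ.erase (0 : Fin n)) := by
    rw [card_erase_of_mem (mem_univ 0), card_univ, Fintype.card_fin]
    omega
  have hsin_lt := sin_sum_lt_sum_sin hcard (fun i _ => arcsin_pos.2 (hratio_pos i)) hsum_le
  simp only [hsin_sum, hsin_arcsin, ← sum_div] at hsin_lt
  exact (div_lt_div_iff_of_pos_right hR0).1 hsin_lt
end

section
/- Let p = (v_1, ..., v_n) be a spherical polygon (v_i ∈ S² ⊂ ℝ³, consecutive vertices distinct and non-antipodal) and let dα_1, ..., dα_n be the first-order variations of its angles under an isometric first-order deformation. Then Σ_{i=1}^n dα_i v_i = 0 in ℝ³. -/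
/-- Euclidean dot product on `ℝ³`. -/
def dot3 (x y : Fin 3 → ℝ) : ℝ := x 0 * y 0 + x 1 * y 1 + x 2 * y 2

/-- Euclidean cross product on `ℝ³`. -/
def cross3 (x y : Fin 3 → ℝ) : Fin 3 → ℝ :=
  ![x 1 * y 2 - x 2 * y 1, x 2 * y 0 - x 0 * y 2, x 0 * y 1 - x 1 * y 0]


lemma cross3_0 (x y : Fin 3 → ℝ) : cross3 x y 0 = x 1 * y 2 - x 2 * y 1 := rfl
lemma cross3_1 (x y : Fin 3 → ℝ) : cross3 x y 1 = x 2 * y 0 - x 0 * y 2 := rfl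
lemma cross3_2 (x y : Fin 3 → ℝ) : cross3 x y 2 = x 0 * y 1 - x 1 * y 0 := rfl

lemma vec3_ext {x y : Fin 3 → ℝ} (h0 : x 0 = y 0) (h1 : x 1 = y 1) (h2 : x 2 = y 2) : x = y := by
  funext k; fin_cases k; exacts [h0, h1, h2]

lemma dot3_comm (x y : Fin 3 → ℝ) : dot3 x y = dot3 y x := by simp only [dot3]; ring

lemma dot3_sub_left (x y z : Fin 3 → ℝ) : dot3 (x - y) z = dot3 x z - dot3 y z := by
  simp only [dot3, Pi.sub_apply]; ring

lemma dot3_smul_left (r : ℝ) (x y : Fin 3 → ℝ) : dot3 (r • x) y = r * dot3 x y := by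
  simp only [dot3, Pi.smul_apply, smul_eq_mul]; ring

lemma cross3_add_left (x y z : Fin 3 → ℝ) : cross3 (x + y) z = cross3 x z + cross3 y z := by
  apply vec3_ext <;>
    simp only [cross3_0, cross3_1, cross3_2, Pi.add_apply] <;> ring

lemma cross3_sub_left (x y z : Fin 3 → ℝ) : cross3 (x - y) z = cross3 x z - cross3 y z := by
  apply vec3_ext <;>
    simp only [cross3_0, cross3_1, cross3_2, Pi.sub_apply] <;> ring

lemma cross3_smul_left (r : ℝ) (x z : Fin 3 → ℝ) : cross3 (r • x) z = r • cross3 x z := by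
  apply vec3_ext <;>
    simp only [cross3_0, cross3_1, cross3_2, Pi.smul_apply, smul_eq_mul] <;> ring

lemma cross3_zero_right (x : Fin 3 → ℝ) : cross3 x 0 = 0 := by
  apply vec3_ext <;>
    simp only [cross3_0, cross3_1, cross3_2, Pi.zero_apply] <;> ring

lemma cross3_self (x : Fin 3 → ℝ) : cross3 x x = 0 := by
  apply vec3_ext <;>
    simp only [cross3_0, cross3_1, cross3_2, Pi.zero_apply] <;> ring

lemma cross_cross_right (x y z : Fin 3 → ℝ) :
    cross3 x (cross3 y z) = dot3 x z • y - dot3 x y • z := by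
  apply vec3_ext <;>
    simp only [dot3, cross3_0, cross3_1, cross3_2, Pi.sub_apply, Pi.smul_apply, smul_eq_mul] <;>
    ring

lemma cross_cross_left (x y z : Fin 3 → ℝ) :
    cross3 (cross3 x y) z = dot3 x z • y - dot3 y z • x := by
  apply vec3_ext <;>
    simp only [dot3, cross3_0, cross3_1, cross3_2, Pi.sub_apply, Pi.smul_apply, smul_eq_mul] <;>
    ring

lemma dot3_cross_self (x y : Fin 3 → ℝ) :
    dot3 (cross3 x y) (cross3 x y) = dot3 x x * dot3 y y - dot3 x y ^ 2 := by
  simp only [dot3, cross3_0, cross3_1, cross3_2]; ring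

lemma eq_smul_of_cross_eq_zero {w b : Fin 3 → ℝ} (hb : dot3 b b = 1)
    (h : cross3 w b = 0) : w = dot3 w b • b := by
  have h1 := cross_cross_right b w b
  rw [h, cross3_zero_right, hb, dot3_comm b w, one_smul] at h1
  exact sub_eq_zero.mp h1.symm

lemma perp_perp {b c w : Fin 3 → ℝ} (hb : dot3 b b = 1) (hc : dot3 c c = 1)
    (hwb : dot3 w b = 0) (hwc : dot3 w c = 0) :
    (1 - dot3 b c ^ 2) • w = dot3 w (cross3 b c) • cross3 b c := by
  have h1 := cross_cross_right w b c
  rw [hwb, hwc, zero_smul, zero_smul, sub_zero] at h1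
  have h2 := cross_cross_right (cross3 b c) w (cross3 b c)
  rw [h1, cross3_zero_right, dot3_cross_self, hb, hc, one_mul, dot3_comm (cross3 b c) w] at h2
  exact sub_eq_zero.mp h2.symm
lemma edge_rotation {b c db dc : Fin 3 → ℝ} (hb : dot3 b b = 1) (hc : dot3 c c = 1)
    (hbdb : dot3 b db = 0) (hcdc : dot3 c dc = 0) (hedge : dot3 db c + dot3 b dc = 0)
    (hg : 1 - dot3 b c ^ 2 ≠ 0) :
    ∃ ω : Fin 3 → ℝ, cross3 ω b = db ∧ cross3 ω c = dc := by
  set w : Fin 3 → ℝ := dc - dot3 b c • db - dot3 b dc • b with hw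
  have hwb : dot3 w b = 0 := by
    rw [hw, dot3_sub_left, dot3_sub_left, dot3_smul_left, dot3_smul_left,
      dot3_comm dc b, dot3_comm db b, hb, hbdb]
    ring
  have hwc : dot3 w c = 0 := by
    rw [hw, dot3_sub_left, dot3_sub_left, dot3_smul_left, dot3_smul_left,
      dot3_comm dc c, dot3_comm b c, hcdc]
    linear_combination (-(dot3 c b)) * hedge
  have hkey := perp_perp hb hc hwb hwc
  refine ⟨cross3 b db + ((1 - dot3 b c ^ 2)⁻¹ * dot3 w (cross3 b c)) • b, ?_, ?_⟩
  · rw [cross3_add_left, cross3_smul_left, cross3_self, smul_zero, add_zero,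
      cross_cross_left, hb, dot3_comm db b, hbdb, one_smul, zero_smul, sub_zero]
  · rw [cross3_add_left, cross3_smul_left, cross_cross_left]
    have h3 : ((1 - dot3 b c ^ 2)⁻¹ * dot3 w (cross3 b c)) • cross3 b c = w := by
      rw [mul_smul, ← hkey, smul_smul, inv_mul_cancel₀ hg, one_smul]
    rw [h3, hw]
    have hd : dot3 db c = -dot3 b dc := by linarith
    rw [hd]
    module

lemma Eac_val (a b c w : Fin 3 → ℝ) (μ : ℝ) :
    dot3 (cross3 w a + μ • cross3 b a) c + dot3 a (cross3 w c)
      = -(μ * dot3 b (cross3 c a)) := by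
  simp only [dot3, cross3_0, cross3_1, cross3_2, Pi.add_apply, Pi.smul_apply, smul_eq_mul]
  ring

lemma Edet_val (a b c w : Fin 3 → ℝ) (μ : ℝ) (hb : dot3 b b = 1) :
    dot3 (cross3 w b) (cross3 c a) + dot3 b (cross3 (cross3 w c) a)
        + dot3 b (cross3 c (cross3 w a + μ • cross3 b a))
      = μ * (dot3 a c - dot3 a b * dot3 b c) := by
  simp only [dot3, cross3_0, cross3_1, cross3_2, Pi.add_apply, Pi.smul_apply, smul_eq_mul] at hb ⊢
  linear_combination (μ * (a 0 * c 0 + a 1 * c 1 + a 2 * c 2)) * hb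

lemma dot3_pos {z : Fin 3 → ℝ} (h : z ≠ 0) : 0 < dot3 z z := by
  have hnn : 0 ≤ dot3 z z := by
    have : dot3 z z = z 0 ^ 2 + z 1 ^ 2 + z 2 ^ 2 := by simp only [dot3]; ring
    rw [this]; positivity
  rcases hnn.lt_or_eq with h' | h'
  · exact h'
  · exfalso
    apply h
    have h0 : z 0 = 0 := by
      have := h'.symm; simp only [dot3] at this
      nlinarith [sq_nonneg (z 0), sq_nonneg (z 1), sq_nonneg (z 2)]
    have h1 : z 1 = 0 := by
      have := h'.symm; simp only [dot3] at this
      nlinarith [sq_nonneg (z 0), sq_nonneg (z 1), sq_nonneg (z 2)]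
    have h2 : z 2 = 0 := by
      have := h'.symm; simp only [dot3] at this
      nlinarith [sq_nonneg (z 0), sq_nonneg (z 1), sq_nonneg (z 2)]
    exact vec3_ext h0 h1 h2

lemma dot3_sq_lt_one {x y : Fin 3 → ℝ} (hx : dot3 x x = 1) (hy : dot3 y y = 1)
    (hne : x ≠ y) (hna : x ≠ -y) : dot3 x y ^ 2 < 1 := by
  have h1 : 0 < dot3 (x - y) (x - y) := dot3_pos (sub_ne_zero.mpr hne)
  have h2 : 0 < dot3 (x + y) (x + y) := by
    apply dot3_pos
    intro h
    exact hna (by rwa [add_eq_zero_iff_eq_neg] at h)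
  have e1 : dot3 (x - y) (x - y) = 2 - 2 * dot3 x y := by
    simp only [dot3, Pi.sub_apply] at *; linarith [hx, hy]
  have e2 : dot3 (x + y) (x + y) = 2 + 2 * dot3 x y := by
    simp only [dot3, Pi.add_apply] at *; linarith [hx, hy]
  nlinarith [h1, h2, e1, e2]
lemma hasDerivAt_dot3 {f g : ℝ → Fin 3 → ℝ} {f' g' : Fin 3 → ℝ}
    (hf : HasDerivAt f f' 0) (hg : HasDerivAt g g' 0) :
    HasDerivAt (fun t => dot3 (f t) (g t)) (dot3 f' (g 0) + dot3 (f 0) g') 0 := by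
  have Hf := hasDerivAt_pi.mp hf
  have Hg := hasDerivAt_pi.mp hg
  have H := (((Hf 0).mul (Hg 0)).add ((Hf 1).mul (Hg 1))).add ((Hf 2).mul (Hg 2))
  convert H using 1
  · rfl
  · rfl
  · funext t; simp only [dot3, Pi.add_apply, Pi.mul_apply]
  · simp only [dot3]; ring

lemma hasDerivAt_dot3cross {f g h : ℝ → Fin 3 → ℝ} {f' g' h' : Fin 3 → ℝ}
    (hf : HasDerivAt f f' 0) (hg : HasDerivAt g g' 0) (hh : HasDerivAt h h' 0) :
    HasDerivAt (fun t => dot3 (f t) (cross3 (g t) (h t)))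
      (dot3 f' (cross3 (g 0) (h 0)) + dot3 (f 0) (cross3 g' (h 0))
        + dot3 (f 0) (cross3 (g 0) h')) 0 := by
  have Hf := hasDerivAt_pi.mp hf
  have Hg := hasDerivAt_pi.mp hg
  have Hh := hasDerivAt_pi.mp hh
  have H := (((Hf 0).mul (((Hg 1).mul (Hh 2)).sub ((Hg 2).mul (Hh 1)))).add
      ((Hf 1).mul (((Hg 2).mul (Hh 0)).sub ((Hg 0).mul (Hh 2))))).add
      ((Hf 2).mul (((Hg 0).mul (Hh 1)).sub ((Hg 1).mul (Hh 0))))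
  convert H using 1
  · rfl
  · rfl
  · funext t; simp only [dot3, cross3_0, cross3_1, cross3_2, Pi.add_apply, Pi.sub_apply, Pi.mul_apply]
  · simp only [dot3, cross3_0, cross3_1, cross3_2, Pi.sub_apply, Pi.mul_apply]; ring

lemma angle_variation_eq (a b c da db dc w1 w2 : Fin 3 → ℝ) (dal S1 S2 sa : ℝ)
    (hbb : dot3 b b = 1)
    (hc1 : cross3 w1 a = da) (hc2 : cross3 w1 b = db)
    (hc3 : cross3 w2 b = db) (hc4 : cross3 w2 c = dc)
    (hS1 : S1 ^ 2 = 1 - dot3 a b ^ 2) (hS2 : S2 ^ 2 = 1 - dot3 b c ^ 2)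
    (h1pos : 0 < 1 - dot3 a b ^ 2) (h2pos : 0 < 1 - dot3 b c ^ 2)
    (hpyth : Real.sin sa ^ 2 + Real.cos sa ^ 2 = 1)
    (hC0 : Real.cos sa * S1 * S2 = dot3 a c - dot3 a b * dot3 b c)
    (hD0 : Real.sin sa * S1 * S2 = dot3 b (cross3 c a))
    (hA : -Real.sin sa * dal * S1 * S2 = dot3 da c + dot3 a dc)
    (hB : Real.cos sa * dal * S1 * S2
      = dot3 db (cross3 c a) + dot3 b (cross3 dc a) + dot3 b (cross3 c da)) :
    dal • b = w1 - w2 := by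
  have hz : cross3 (w1 - w2) b = 0 := by rw [cross3_sub_left, hc2, hc3, sub_self]
  have hpar : w1 - w2 = dot3 (w1 - w2) b • b := eq_smul_of_cross_eq_zero hbb hz
  set μ := dot3 (w1 - w2) b with hμ
  have hw1 : w1 = μ • b + w2 := by
    have := sub_eq_iff_eq_add.mp hpar
    linear_combination (norm := module) this
  have hda : da = cross3 w2 a + μ • cross3 b a := by
    rw [← hc1, hw1, cross3_add_left, cross3_smul_left, add_comm]
  have hEac : dot3 da c + dot3 a dc = -(μ * dot3 b (cross3 c a)) := by
    rw [hda, ← hc4]; exact Eac_val a b c w2 μ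
  have hEdet : dot3 db (cross3 c a) + dot3 b (cross3 dc a) + dot3 b (cross3 c da)
      = μ * (dot3 a c - dot3 a b * dot3 b c) := by
    rw [hda, ← hc3, ← hc4]; exact Edet_val a b c w2 μ hbb
  set C := dot3 a c - dot3 a b * dot3 b c with hCdef
  set D := dot3 b (cross3 c a) with hDdef
  have hDd : D * dal = μ * D := by
    linear_combination (-dal) * hD0 - hA - hEac
  have hCd : C * dal = μ * C := by
    linear_combination (-dal) * hC0 + hB + hEdet
  have hCD : C ^ 2 + D ^ 2 = (1 - dot3 a b ^ 2) * (1 - dot3 b c ^ 2) := by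
    have e1 : C ^ 2 = Real.cos sa ^ 2 * (S1 ^ 2 * S2 ^ 2) := by rw [← hC0]; ring
    have e2 : D ^ 2 = Real.sin sa ^ 2 * (S1 ^ 2 * S2 ^ 2) := by rw [← hD0]; ring
    rw [e1, e2, hS1, hS2]
    linear_combination ((1 - dot3 a b ^ 2) * (1 - dot3 b c ^ 2)) * hpyth
  have hpos : (0:ℝ) < C ^ 2 + D ^ 2 := by rw [hCD]; exact mul_pos h1pos h2pos
  have hdal : dal = μ := by
    have h := mul_left_cancel₀ (ne_of_gt hpos)
      (show (C ^ 2 + D ^ 2) * dal = (C ^ 2 + D ^ 2) * μ by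
        linear_combination C * hCd + D * hDd)
    exact h
  rw [hdal]; exact hpar.symm


/-- for a spherical polygon `v t : ZMod n → S² ⊂ ℝ³` (consecutive vertices
distinct and non-antipodal) undergoing an isometric first-order deformation (the inner
products of consecutive vertices, i.e. the cosines of the edge lengths, are constant in
`t`), with (oriented) angles `α t i` at the vertices determined by their cosine and sine,
the first-order variations `dα i` of the angles satisfy `∑ dα i • v i = 0` in `ℝ³`. -/
theorem spherical_polygon_angle_variation
    (n : ℕ) [NeZero n] (hn : 3 ≤ n)
    (v : ℝ → ZMod n → (Fin 3 → ℝ)) (α : ℝ → ZMod n → ℝ)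
    (hunit : ∀ t i, dot3 (v t i) (v t i) = 1)
    (hne : ∀ t i, v t i ≠ v t (i + 1))
    (hna : ∀ t i, v t i ≠ -v t (i + 1))
    (hiso : ∀ t i, dot3 (v t i) (v t (i + 1)) = dot3 (v 0 i) (v 0 (i + 1)))
    (hcos : ∀ t i,
      Real.cos (α t i) * Real.sqrt (1 - (dot3 (v t (i - 1)) (v t i)) ^ 2)
          * Real.sqrt (1 - (dot3 (v t i) (v t (i + 1))) ^ 2)
        = dot3 (v t (i - 1)) (v t (i + 1))
          - dot3 (v t (i - 1)) (v t i) * dot3 (v t i) (v t (i + 1)))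
    (hsin : ∀ t i,
      Real.sin (α t i) * Real.sqrt (1 - (dot3 (v t (i - 1)) (v t i)) ^ 2)
          * Real.sqrt (1 - (dot3 (v t i) (v t (i + 1))) ^ 2)
        = dot3 (v t i) (cross3 (v t (i + 1)) (v t (i - 1))))
    (dv : ZMod n → Fin 3 → ℝ)
    (hdv : ∀ i, HasDerivAt (fun t => v t i) (dv i) 0)
    (dα : ZMod n → ℝ)
    (hdα : ∀ i, HasDerivAt (fun t => α t i) (dα i) 0) :
    ∑ i : ZMod n, dα i • v 0 i = 0 := by
  classical
  have hidx : ∀ i : ZMod n, i - 1 + 1 = i := fun i => by ring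
  -- vertices stay tangent
  have hbd : ∀ i, dot3 (v 0 i) (dv i) = 0 := by
    intro i
    have h1 := hasDerivAt_dot3 (hdv i) (hdv i)
    have h2 : (fun t => dot3 (v t i) (v t i)) = fun _ => (1:ℝ) := funext fun t => hunit t i
    have h3 : HasDerivAt (fun t => dot3 (v t i) (v t i)) 0 0 := by
      rw [h2]; exact hasDerivAt_const _ _
    have h4 := h1.unique h3
    have h5 := dot3_comm (dv i) (v 0 i)
    linarith
  -- edge lengths preserved to first order
  have hedge : ∀ i, dot3 (dv i) (v 0 (i+1)) + dot3 (v 0 i) (dv (i+1)) = 0 := by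
    intro i
    have h1 := hasDerivAt_dot3 (hdv i) (hdv (i+1))
    have h2 : (fun t => dot3 (v t i) (v t (i+1))) = fun _ => dot3 (v 0 i) (v 0 (i+1)) :=
      funext fun t => hiso t i
    have h3 : HasDerivAt (fun t => dot3 (v t i) (v t (i+1))) 0 0 := by
      rw [h2]; exact hasDerivAt_const _ _
    exact h1.unique h3
  have hgpos : ∀ i, 0 < 1 - dot3 (v 0 i) (v 0 (i+1)) ^ 2 := by
    intro i
    have := dot3_sq_lt_one (hunit 0 i) (hunit 0 (i+1)) (hne 0 i) (hna 0 i)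
    linarith
  -- rotation vector of each edge
  have hexists : ∀ i : ZMod n, ∃ ω : Fin 3 → ℝ,
      cross3 ω (v 0 i) = dv i ∧ cross3 ω (v 0 (i+1)) = dv (i+1) := fun i =>
    edge_rotation (hunit 0 i) (hunit 0 (i+1)) (hbd i) (hbd (i+1)) (hedge i)
      (ne_of_gt (hgpos i))
  choose ω hω1 hω2 using hexists
  have key : ∀ i : ZMod n, dα i • v 0 i = ω (i - 1) - ω i := by
    intro i
    -- shorthand for the two constant square-root factors
    set S1 : ℝ := Real.sqrt (1 - dot3 (v 0 (i-1)) (v 0 i) ^ 2) with hS1def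
    set S2 : ℝ := Real.sqrt (1 - dot3 (v 0 i) (v 0 (i+1)) ^ 2) with hS2def
    have h1pos : 0 < 1 - dot3 (v 0 (i-1)) (v 0 i) ^ 2 := by
      have := hgpos (i-1); rwa [hidx i] at this
    have h2pos := hgpos i
    have hS1 : S1 ^ 2 = 1 - dot3 (v 0 (i-1)) (v 0 i) ^ 2 := Real.sq_sqrt (le_of_lt h1pos)
    have hS2 : S2 ^ 2 = 1 - dot3 (v 0 i) (v 0 (i+1)) ^ 2 := Real.sq_sqrt (le_of_lt h2pos)
    -- the sqrt factors are constant in t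
    have hiso1 : ∀ t, dot3 (v t (i-1)) (v t i) = dot3 (v 0 (i-1)) (v 0 i) := by
      intro t; have := hiso t (i-1); rwa [hidx i] at this
    have hiso2 : ∀ t, dot3 (v t i) (v t (i+1)) = dot3 (v 0 i) (v 0 (i+1)) := fun t => hiso t i
    -- derivative of the cosine relation
    have hA : -Real.sin (α 0 i) * dα i * S1 * S2
        = dot3 (dv (i-1)) (v 0 (i+1)) + dot3 (v 0 (i-1)) (dv (i+1)) := by
      have hf : HasDerivAt (fun t => Real.cos (α t i) * S1 * S2)
          (-Real.sin (α 0 i) * dα i * S1 * S2) 0 := (((hdα i).cos).mul_const S1).mul_const S2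
      have hg : HasDerivAt
          (fun t => dot3 (v t (i-1)) (v t (i+1))
            - dot3 (v 0 (i-1)) (v 0 i) * dot3 (v 0 i) (v 0 (i+1)))
          (dot3 (dv (i-1)) (v 0 (i+1)) + dot3 (v 0 (i-1)) (dv (i+1))) 0 :=
        (hasDerivAt_dot3 (hdv (i-1)) (hdv (i+1))).sub_const _
      have heq : (fun t => Real.cos (α t i) * S1 * S2)
          = fun t => dot3 (v t (i-1)) (v t (i+1))
            - dot3 (v 0 (i-1)) (v 0 i) * dot3 (v 0 i) (v 0 (i+1)) := by
        funext t
        have h := hcos t i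
        rw [hiso1 t, hiso2 t] at h
        rw [← hS1def, ← hS2def] at h
        exact h
      exact hf.unique (by rw [heq]; exact hg)
    -- derivative of the sine relation
    have hB : Real.cos (α 0 i) * dα i * S1 * S2
        = dot3 (dv i) (cross3 (v 0 (i+1)) (v 0 (i-1)))
          + dot3 (v 0 i) (cross3 (dv (i+1)) (v 0 (i-1)))
          + dot3 (v 0 i) (cross3 (v 0 (i+1)) (dv (i-1))) := by
      have hf : HasDerivAt (fun t => Real.sin (α t i) * S1 * S2)
          (Real.cos (α 0 i) * dα i * S1 * S2) 0 := (((hdα i).sin).mul_const S1).mul_const S2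
      have hg := hasDerivAt_dot3cross (hdv i) (hdv (i+1)) (hdv (i-1))
      have heq : (fun t => Real.sin (α t i) * S1 * S2)
          = fun t => dot3 (v t i) (cross3 (v t (i+1)) (v t (i-1))) := by
        funext t
        have h := hsin t i
        rw [hiso1 t, hiso2 t] at h
        rw [← hS1def, ← hS2def] at h
        exact h
      exact hf.unique (by rw [heq]; exact hg)
    -- cosine and sine at time 0
    have hC0 : Real.cos (α 0 i) * S1 * S2
        = dot3 (v 0 (i-1)) (v 0 (i+1)) - dot3 (v 0 (i-1)) (v 0 i) * dot3 (v 0 i) (v 0 (i+1)) :=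
      hcos 0 i
    have hD0 : Real.sin (α 0 i) * S1 * S2
        = dot3 (v 0 i) (cross3 (v 0 (i+1)) (v 0 (i-1))) := hsin 0 i
    -- cross facts
    have hc1 : cross3 (ω (i-1)) (v 0 (i-1)) = dv (i-1) := hω1 (i-1)
    have hc2 : cross3 (ω (i-1)) (v 0 i) = dv i := by
      have := hω2 (i-1); rwa [hidx i] at this
    have hc3 : cross3 (ω i) (v 0 i) = dv i := hω1 i
    have hc4 : cross3 (ω i) (v 0 (i+1)) = dv (i+1) := hω2 i
    exact angle_variation_eq (v 0 (i-1)) (v 0 i) (v 0 (i+1)) (dv (i-1)) (dv i) (dv (i+1))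
      (ω (i-1)) (ω i) (dα i) S1 S2 (α 0 i) (hunit 0 i) hc1 hc2 hc3 hc4 hS1 hS2 h1pos h2pos
      (Real.sin_sq_add_cos_sq (α 0 i)) hC0 hD0 hA hB
  calc ∑ i : ZMod n, dα i • v 0 i = ∑ i : ZMod n, (ω (i-1) - ω i) :=
        Finset.sum_congr rfl (fun i _ => key i)
    _ = (∑ i : ZMod n, ω (i-1)) - ∑ i : ZMod n, ω i := Finset.sum_sub_distrib _ _
    _ = 0 := by
        have hre := Fintype.sum_equiv (Equiv.subRight (1 : ZMod n))
          (fun x : ZMod n => ω (x - 1)) ω (fun i => rfl)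
        rw [hre]
        exact sub_self _
end
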